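/- An ideal I on ω is weakly Ramsey if and only if for every partition (X_n)_{n∈ω} of ω into sets belonging to I there exists an increasing function f: ω → ω with I-positive range and such that f(n+1) ∈ ∪_{i > f(n)} X_i for each n ∈ ω. -/

import Mathlib

open Set

/-- `I` is an ideal on `α`: closed under subsets and finite unions,
contains all finite sets, and is not all of `P(α)`. -/
def IsIdealOn {α : Type*} (I : Set (Set α)) : Prop :=
  (∀ A ∈ I, ∀ B : Set α, B ⊆ A → B ∈ I) ∧
  (∀ A ∈ I, ∀ B ∈ I, A ∪ B ∈ I) ∧
  (∀ A : Set α, A.Finite → A ∈ I) ∧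
  (Set.univ : Set α) ∉ I

/-- Generator of the first type of `WR`: a vertical line. -/
def WRgen1 (S : Set (ℕ × ℕ)) : Prop := ∃ i, S = {p : ℕ × ℕ | p.1 = i}

/-- Generator of the second type of `WR`. -/
def WRgen2 (S : Set (ℕ × ℕ)) : Prop :=
  ∀ p ∈ S, ∀ q ∈ S, p ≠ q → p.1 > q.1 + q.2 ∨ q.1 > p.1 + p.2

/-- The ideal `WR`: sets covered by finitely many generators. -/
def WR : Set (Set (ℕ × ℕ)) :=
  {A | ∃ C : Finset (Set (ℕ × ℕ)), (∀ S ∈ C, WRgen1 S ∨ WRgen2 S) ∧ A ⊆ ⋃₀ ↑C}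

/-- Generator of `ED↑`: a vertical line or the graph of a nondecreasing function. -/
def EDgen (S : Set (ℕ × ℕ)) : Prop :=
  (∃ i, S = {p : ℕ × ℕ | p.1 = i}) ∨
  (∃ f : ℕ → ℕ, Monotone f ∧ S = {p : ℕ × ℕ | p.2 = f p.1})

/-- The ideal `ED↑`. -/
def EDup : Set (Set (ℕ × ℕ)) :=
  {A | ∃ C : Finset (Set (ℕ × ℕ)), (∀ S ∈ C, EDgen S) ∧ A ⊆ ⋃₀ ↑C}

/-- A tree of finite sequences: closed under taking prefixes. -/
def IsTree {α : Type*} (T : Set (List α)) : Prop :=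
  ∀ s ∈ T, ∀ t : List α, t <+: s → t ∈ T

/-- `I` is weakly Ramsey: every (nonempty) tree all of whose ramifications
belong to the dual filter `I*` has a branch with `I`-positive range. -/
def WeaklyRamsey {α : Type*} (I : Set (Set α)) : Prop :=
  ∀ T : Set (List α), ([] : List α) ∈ T → IsTree T →
    (∀ s ∈ T, {x : α | s ++ [x] ∈ T}ᶜ ∈ I) →
    ∃ b : ℕ → α, (∀ k, (List.range k).map b ∈ T) ∧ Set.range b ∉ I

/-- `(X n)` is a partition of `α`. -/
def IsPartition {α : Type*} (X : ℕ → Set α) : Prop :=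
  (∀ m n, m ≠ n → Disjoint (X m) (X n)) ∧ (⋃ n, X n) = Set.univ

/-- `S` is a selector: it meets each piece in at most one point. -/
def IsSelector {α : Type*} (X : ℕ → Set α) (S : Set α) : Prop :=
  ∀ n, (S ∩ X n).Subsingleton

/-- Locally selective: every partition into sets from `I` has an `I`-positive selector. -/
def LocallySelective {α : Type*} (I : Set (Set α)) : Prop :=
  ∀ X : ℕ → Set α, IsPartition X → (∀ n, X n ∈ I) →
    ∃ S : Set α, IsSelector X S ∧ S ∉ I

/-- Weakly selective. -/
def WeaklySelective {α : Type*} (I : Set (Set α)) : Prop :=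
  ∀ X : ℕ → Set α, IsPartition X → {n | X n ∉ I}.Subsingleton →
    (∀ n, (⋃ m, ⋃ _ : n ≤ m, X m) ∉ I) →
    ∃ S : Set α, IsSelector X S ∧ S ∉ I

/-!
(⇒) The tree of finite sequences in which each term `x` following `a` satisfies `a < x` and lies
in a piece `X i` with `a < i` has its ramifications in `I*`: the forbidden successors of `a` lie in
`{0, …, a} ∪ X 0 ∪ ⋯ ∪ X a`. A positive branch is the required `f`.

(⇐) Let `E n` be the set of points extending every node of `T` of length `≤ n + 1` with entries
`≤ n`; there are finitely many such nodes, so `E n ∈ I*`. If `K = ⋂ n, E n` is positive, any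
enumeration of `K` is a branch. Otherwise the partition of `ω` by the least `n` with `x ∉ E n`
has its pieces in `I`, and the `f` it yields satisfies `f (n + 1) ∈ E (f n)`, so `n ↦ f (n + 1)` is
a branch with positive range.
-/

namespace IsIdealOn

variable {α : Type*} {I : Set (Set α)}

theorem mono (hI : IsIdealOn I) {A B : Set α} (hA : A ∈ I) (hBA : B ⊆ A) : B ∈ I :=
  hI.1 A hA B hBA

theorem union_mem (hI : IsIdealOn I) {A B : Set α} (hA : A ∈ I) (hB : B ∈ I) : A ∪ B ∈ I :=
  hI.2.1 A hA B hB

theorem finite_mem (hI : IsIdealOn I) {A : Set α} (hA : A.Finite) : A ∈ I :=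
  hI.2.2.1 A hA

theorem biUnion_mem (hI : IsIdealOn I) {β : Type*} {F : Set β} (hF : F.Finite)
    {g : β → Set α} (hg : ∀ b ∈ F, g b ∈ I) : (⋃ b ∈ F, g b) ∈ I := by
  induction F, hF using Set.Finite.induction_on with
  | empty => simpa using hI.finite_mem Set.finite_empty
  | insert _ _ ih =>
    rw [Set.biUnion_insert]
    exact hI.union_mem (hg _ (Set.mem_insert _ _))
      (ih fun b hb => hg b (Set.mem_insert_of_mem _ hb))

end IsIdealOn

section Chains

variable {α : Type*} (R : α → α → Prop)

theorem isTree_setOf_isChain : IsTree {s : List α | s.IsChain R} := by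
  rintro s hs t ⟨u, rfl⟩
  exact List.IsChain.left_of_append hs

theorem compl_setOf_isChain_append_singleton {s : List α} (hs : s.IsChain R) :
    {x | (s ++ [x]).IsChain R}ᶜ = {x | ∃ a ∈ s.getLast?, ¬R a x} := by
  ext x
  simp [List.isChain_append, hs]

theorem rel_succ_of_forall_isChain_map_range {b : ℕ → α}
    (hb : ∀ k, ((List.range k).map b).IsChain R) (n : ℕ) : R (b n) (b (n + 1)) := by
  have h := hb (n + 2)
  rw [List.isChain_map, List.isChain_range_succ] at h
  exact h n (Nat.lt_succ_self n)

end Chains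

theorem WeaklyRamsey.exists_strictMono_of_partition {I : Set (Set ℕ)} (hI : IsIdealOn I)
    (hWR : WeaklyRamsey I) (X : ℕ → Set ℕ) (hX : IsPartition X) (hXI : ∀ n, X n ∈ I) :
    ∃ f : ℕ → ℕ, StrictMono f ∧ Set.range f ∉ I ∧
      ∀ n, f (n + 1) ∈ ⋃ i, ⋃ _ : f n < i, X i := by
  let R : ℕ → ℕ → Prop := fun a x => a < x ∧ x ∈ ⋃ i, ⋃ _ : a < i, X i
  have hsmall : ∀ a, {x | ¬R a x} ∈ I := by
    intro a
    refine hI.mono (hI.union_mem (hI.finite_mem (Set.finite_Iic a))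
      (hI.biUnion_mem (Set.finite_Iic a) fun i _ => hXI i)) ?_
    intro x hx
    obtain ⟨j, hj⟩ := Set.mem_iUnion.mp (hX.2.symm ▸ Set.mem_univ x : x ∈ ⋃ n, X n)
    by_cases hax : a < x
    · refine Or.inr (Set.mem_biUnion (x := j) ?_ hj)
      by_contra hja
      exact hx ⟨hax, Set.mem_iUnion₂.mpr ⟨j, not_le.mp hja, hj⟩⟩
    · exact Or.inl (not_lt.mp hax)
  have hram : ∀ s : List ℕ, s.IsChain R → {x | (s ++ [x]).IsChain R}ᶜ ∈ I := by
    intro s hs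
    rw [compl_setOf_isChain_append_singleton R hs]
    cases s.getLast? with
    | none => simpa using hI.finite_mem Set.finite_empty
    | some a => simpa using hsmall a
  obtain ⟨f, hf, hfI⟩ := hWR _ List.isChain_nil (isTree_setOf_isChain R) hram
  have hstep := rel_succ_of_forall_isChain_map_range R hf
  exact ⟨f, strictMono_nat_of_lt_succ fun n => (hstep n).1, hfI, fun n => (hstep n).2⟩

section FirstExit

variable {α : Type*} (E : ℕ → Set α)

open Classical

noncomputable def firstExit (x : α) : ℕ :=
  if h : ∃ n, x ∉ E n then Nat.find h else 0

theorem mem_of_lt_firstExit {x : α} {m : ℕ} (hm : m < firstExit E x) : x ∈ E m := by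
  unfold firstExit at hm
  split_ifs at hm with h
  · exact not_not.mp (Nat.find_min h hm)
  · exact absurd hm (Nat.not_lt_zero m)

theorem fiber_firstExit_subset (n : ℕ) : {x | firstExit E x = n} ⊆ (⋂ m, E m) ∪ (E n)ᶜ := by
  intro x hx
  by_cases h : ∃ m, x ∉ E m
  · right
    rw [Set.mem_ofPred_eq, firstExit, dif_pos h] at hx
    exact hx ▸ Nat.find_spec h
  · exact Or.inl (Set.mem_iInter.mpr (not_exists_not.mp h))

end FirstExit

theorem isPartition_fibers {α : Type*} (d : α → ℕ) : IsPartition fun n => {x | d x = n} :=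
  ⟨fun _ _ hmn => Set.disjoint_left.mpr fun _ hm hn => hmn (hm.symm.trans hn),
    Set.iUnion_eq_univ_iff.mpr fun x => ⟨d x, rfl⟩⟩

namespace WeaklyRamsey

variable (T : Set (List ℕ))

def boundedNodes (n : ℕ) : Set (List ℕ) :=
  {s | s ∈ T ∧ s.length ≤ n + 1 ∧ ∀ x ∈ s, x ≤ n}

def commonSucc (n : ℕ) : Set ℕ :=
  ⋂ s ∈ boundedNodes T n, {x | s ++ [x] ∈ T}

theorem boundedNodes_finite (n : ℕ) : (boundedNodes T n).Finite := by
  refine ((List.finite_length_le (Fin (n + 1)) (n + 1)).image (List.map Fin.val)).subset ?_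
  rintro s ⟨-, hlen, hmem⟩
  refine ⟨s.pmap (fun x h => (⟨x, h⟩ : Fin (n + 1))) fun x hx => Nat.lt_succ_of_le (hmem x hx),
    by simpa using hlen, by simp [List.map_pmap]⟩

theorem compl_commonSucc_mem {I : Set (Set ℕ)} (hI : IsIdealOn I)
    (hram : ∀ s ∈ T, {x : ℕ | s ++ [x] ∈ T}ᶜ ∈ I) (n : ℕ) : (commonSucc T n)ᶜ ∈ I := by
  rw [commonSucc, Set.compl_iInter₂]
  exact hI.biUnion_mem (boundedNodes_finite T n) fun s hs => hram s hs.1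

variable {T}

theorem map_range_mem_of_mem_commonSucc (hnil : [] ∈ T) {b N : ℕ → ℕ} (hlen : ∀ k, k ≤ N k + 1)
    (hbound : ∀ i k, i < k → b i ≤ N k) (hb : ∀ k, b k ∈ commonSucc T (N k)) (k : ℕ) :
    (List.range k).map b ∈ T := by
  induction k with
  | zero => simpa using hnil
  | succ k ih =>
    rw [List.range_succ, List.map_append, List.map_singleton]
    refine Set.mem_iInter₂.mp (hb k) _ ⟨ih, by simpa using hlen k, ?_⟩
    simp only [List.mem_map, List.mem_range]
    rintro _ ⟨i, hi, rfl⟩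
    exact hbound i k hi

theorem exists_branch_of_iInter_commonSucc_notMem {I : Set (Set ℕ)} (hI : IsIdealOn I)
    (hnil : [] ∈ T) (hK : (⋂ n, commonSucc T n) ∉ I) :
    ∃ b : ℕ → ℕ, (∀ k, (List.range k).map b ∈ T) ∧ Set.range b ∉ I := by
  have hne : (⋂ n, commonSucc T n).Nonempty :=
    Set.nonempty_iff_ne_empty.mpr fun h => hK (h ▸ hI.finite_mem Set.finite_empty)
  obtain ⟨b, hb⟩ := (Set.to_countable _).exists_eq_range hne
  refine ⟨b, map_range_mem_of_mem_commonSucc hnil (N := fun k => k + ∑ i ∈ Finset.range k, b i)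
    (fun k => by omega) (fun i k hi => ?_) (fun k => ?_), hb ▸ hK⟩
  · exact (Finset.single_le_sum (fun _ _ => Nat.zero_le _) (Finset.mem_range.mpr hi)).trans
      (Nat.le_add_left _ _)
  · exact Set.mem_iInter.mp (hb.symm ▸ Set.mem_range_self k) _

theorem exists_branch_of_iInter_commonSucc_mem {I : Set (Set ℕ)} (hI : IsIdealOn I)
    (hP : ∀ X : ℕ → Set ℕ, IsPartition X → (∀ n, X n ∈ I) →
      ∃ f : ℕ → ℕ, StrictMono f ∧ Set.range f ∉ I ∧ ∀ n, f (n + 1) ∈ ⋃ i, ⋃ _ : f n < i, X i)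
    (hnil : [] ∈ T) (hram : ∀ s ∈ T, {x : ℕ | s ++ [x] ∈ T}ᶜ ∈ I)
    (hK : (⋂ n, commonSucc T n) ∈ I) :
    ∃ b : ℕ → ℕ, (∀ k, (List.range k).map b ∈ T) ∧ Set.range b ∉ I := by
  let d := firstExit (commonSucc T)
  obtain ⟨f, hf, hfI, hstep⟩ := hP (fun n => {x | d x = n}) (isPartition_fibers d) fun n =>
    hI.mono (hI.union_mem hK (compl_commonSucc_mem T hI hram n)) (fiber_firstExit_subset _ n)
  have hsucc : ∀ k, f (k + 1) ∈ commonSucc T (f k) := by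
    intro k
    obtain ⟨i, hi, hdi⟩ := Set.mem_iUnion₂.mp (hstep k)
    exact mem_of_lt_firstExit _ (lt_of_lt_of_eq hi hdi.symm)
  refine ⟨fun k => f (k + 1), map_range_mem_of_mem_commonSucc hnil (N := f)
    (fun k => (hf.id_le k).trans (Nat.le_succ _)) (fun i k hi => hf.monotone hi) hsucc, ?_⟩
  intro hbI
  refine hfI (hI.mono (hI.union_mem hbI (hI.finite_mem (Set.finite_singleton (f 0)))) ?_)
  rintro _ ⟨_ | m, rfl⟩
  · exact Or.inr rfl
  · exact Or.inl ⟨m, rfl⟩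

end WeaklyRamsey

theorem weaklyRamsey_of_partition {I : Set (Set ℕ)} (hI : IsIdealOn I)
    (hP : ∀ X : ℕ → Set ℕ, IsPartition X → (∀ n, X n ∈ I) →
      ∃ f : ℕ → ℕ, StrictMono f ∧ Set.range f ∉ I ∧ ∀ n, f (n + 1) ∈ ⋃ i, ⋃ _ : f n < i, X i) :
    WeaklyRamsey I := by
  intro T hnil _ hram
  by_cases hK : (⋂ n, WeaklyRamsey.commonSucc T n) ∈ I
  · exact WeaklyRamsey.exists_branch_of_iInter_commonSucc_mem hI hP hnil hram hK
  · exact WeaklyRamsey.exists_branch_of_iInter_commonSucc_notMem hI hnil hK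

theorem weaklyRamsey_iff_partition (I : Set (Set ℕ)) (hI : IsIdealOn I) :
    WeaklyRamsey I ↔
    ∀ X : ℕ → Set ℕ, IsPartition X → (∀ n, X n ∈ I) →
      ∃ f : ℕ → ℕ, StrictMono f ∧ Set.range f ∉ I ∧
        ∀ n, f (n + 1) ∈ ⋃ i, ⋃ _ : f n < i, X i :=
  ⟨fun hWR => hWR.exists_strictMono_of_partition hI, weaklyRamsey_of_partition hI⟩
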